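/- Let M be an n×n irreducible matrix with nonnegative entries and spectral radius λ > 0, and let x be a nonzero vector with nonnegative entries. Then limsup_{k→∞} (1/k)·log(‖M^k x‖₁) = log λ; in fact the limit exists and equals log λ. -/

import Mathlib

open Matrix Filter

/-- The spectral radius of a real square matrix: the supremum of the absolute
values of its complex eigenvalues. -/
noncomputable def specRad {m : Type*} [Fintype m] [DecidableEq m] (M : Matrix m m ℝ) : ℝ :=
  sSup ((fun z : ℂ => ‖z‖) '' spectrum ℂ (M.map Complex.ofReal))

/-- A nonnegative square matrix is irreducible if for every pair of indices `(i,j)`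
some power of the matrix has positive `(i,j)` entry. -/
def MatIrreducible {m : Type*} [Fintype m] [DecidableEq m] (M : Matrix m m ℝ) : Prop :=
  ∀ i j, ∃ N : ℕ, 0 < N ∧ 0 < (M ^ N) i j

/-!
Gelfand's formula gives `‖M ^ k‖ ^ (1 / k) → λ`, and for a nonnegative matrix `‖M ^ k‖` agrees up
to a factor `n` with the total mass `‖M ^ k 𝟙‖₁`; since `x ≤ (∑ x) • 𝟙`, this bounds `‖M ^ k x‖₁`
from above. For the lower bound, irreducibility makes `∑_{t < T} M ^ t` entrywise positive for
some `T`, so `∑_{t < T} ‖M ^ (k + t) x‖₁ ≥ c ‖M ^ k 𝟙‖₁`; and since every column of `M` has a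
positive entry, `‖M ^ k x‖₁` shrinks at most geometrically from one step to the next, so the last
term `‖M ^ (k + T) x‖₁` of the window controls the whole sum. Bounded factors and a bounded index
shift do not change the exponential growth rate.
-/

open Topology

theorem tendsto_one_div_mul_log_of_le_of_le {f g h : ℕ → ℝ} {L : ℝ}
    (hg : Tendsto (fun k : ℕ => 1 / (k : ℝ) * Real.log (g k)) atTop (𝓝 L))
    (hh : Tendsto (fun k : ℕ => 1 / (k : ℝ) * Real.log (h k)) atTop (𝓝 L))
    (hg0 : ∀ k, 0 < g k) (hgf : ∀ k, g k ≤ f k) (hfh : ∀ k, f k ≤ h k) :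
    Tendsto (fun k : ℕ => 1 / (k : ℝ) * Real.log (f k)) atTop (𝓝 L) :=
  tendsto_of_tendsto_of_tendsto_of_le_of_le hg hh
    (fun k => by gcongr; exacts [hg0 k, hgf k])
    (fun k => by gcongr; exacts [(hg0 k).trans_le (hgf k), hfh k])

theorem tendsto_one_div_mul_log_const_mul {u : ℕ → ℝ} {L c : ℝ} (hc : 0 < c) (hu : ∀ k, 0 < u k)
    (h : Tendsto (fun k : ℕ => 1 / (k : ℝ) * Real.log (u k)) atTop (𝓝 L)) :
    Tendsto (fun k : ℕ => 1 / (k : ℝ) * Real.log (c * u k)) atTop (𝓝 L) := by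
  have hc' : Tendsto (fun k : ℕ => 1 / (k : ℝ) * Real.log c) atTop (𝓝 0) := by
    simpa using tendsto_one_div_atTop_nhds_zero_nat.mul_const (Real.log c)
  simpa [Real.log_mul hc.ne' (hu _).ne', mul_add] using hc'.add h

theorem tendsto_one_div_mul_log_comp_add_iff {u : ℕ → ℝ} {L : ℝ} (T : ℕ) :
    Tendsto (fun k : ℕ => 1 / (k : ℝ) * Real.log (u (k + T))) atTop (𝓝 L) ↔
      Tendsto (fun k : ℕ => 1 / (k : ℝ) * Real.log (u k)) atTop (𝓝 L) := by
  rw [← tendsto_add_atTop_iff_nat (f := fun k : ℕ => 1 / (k : ℝ) * Real.log (u k)) T]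
  have hr : Tendsto (fun k : ℕ => (k : ℝ) / (k + T)) atTop (𝓝 1) :=
    tendsto_natCast_div_add_atTop (T : ℝ)
  have hr' : Tendsto (fun k : ℕ => ((k : ℝ) / (k + T))⁻¹) atTop (𝓝 1) := by
    simpa using hr.inv₀ one_ne_zero
  have key : ∀ᶠ k : ℕ in atTop, 1 / ((k + T : ℕ) : ℝ) * Real.log (u (k + T)) =
      (k : ℝ) / (k + T) * (1 / (k : ℝ) * Real.log (u (k + T))) := by
    filter_upwards [eventually_gt_atTop 0] with k hk
    have : (k : ℝ) ≠ 0 := by positivity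
    push_cast
    field_simp
  constructor
  · intro h
    simpa using (hr.mul h).congr' (key.mono fun k hk => hk.symm)
  · intro h
    rw [← one_mul L]
    refine (hr'.mul h).congr' ?_
    filter_upwards [key, eventually_gt_atTop 0] with k hk hk0
    have : (k : ℝ) / (k + T) ≠ 0 := by positivity
    rw [hk, inv_mul_cancel_left₀ this]

section BanachAlgebra
variable {A : Type*} [NormedRing A] [NormedAlgebra ℂ A] [CompleteSpace A]

theorem spectralRadius_eq_ofReal_sSup_norm [Nontrivial A] (a : A) :
    spectralRadius ℂ a = ENNReal.ofReal (sSup ((fun z : ℂ => ‖z‖) '' spectrum ℂ a)) := by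
  obtain ⟨z, hz, hz_eq⟩ := spectrum.exists_nnnorm_eq_spectralRadius a
  have hmax : IsGreatest ((fun z : ℂ => ‖z‖) '' spectrum ℂ a) ‖z‖ := by
    refine ⟨⟨z, hz, rfl⟩, ?_⟩
    rintro _ ⟨w, hw, rfl⟩
    have : (‖w‖₊ : ENNReal) ≤ ‖z‖₊ := hz_eq ▸ le_iSup₂ (f := fun w _ => (‖w‖₊ : ENNReal)) w hw
    exact_mod_cast this
  rw [hmax.csSup_eq, ← hz_eq, ofReal_norm, enorm_eq_nnnorm]

theorem tendsto_one_div_mul_log_norm_pow (a : A) {r : ℝ} (hr : 0 < r)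
    (ha : spectralRadius ℂ a = ENNReal.ofReal r) :
    Tendsto (fun k : ℕ => 1 / (k : ℝ) * Real.log ‖a ^ k‖) atTop (𝓝 (Real.log r)) := by
  have hgelfand := spectrum.pow_norm_pow_one_div_tendsto_nhds_spectralRadius a
  rw [ha] at hgelfand
  have hroot : Tendsto (fun k : ℕ => ‖a ^ k‖ ^ (1 / (k : ℝ))) atTop (𝓝 r) := by
    simpa [Function.comp_def, ENNReal.toReal_ofReal, Real.rpow_nonneg, hr.le] using
      (ENNReal.tendsto_toReal ENNReal.ofReal_ne_top).comp hgelfand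
  have hpos : ∀ᶠ k : ℕ in atTop, 0 < ‖a ^ k‖ := by
    filter_upwards [hroot.eventually (eventually_gt_nhds hr), eventually_gt_atTop 0] with k hk hk0
    refine (norm_nonneg _).lt_of_ne fun h0 => ?_
    rw [← h0, Real.zero_rpow (by positivity)] at hk
    exact hk.false
  refine ((Real.continuousAt_log hr.ne').tendsto.comp hroot).congr' ?_
  filter_upwards [hpos] with k hk
  simp [Real.log_rpow hk]
end BanachAlgebra

theorem exists_pos_forall_le_of_pos {ι : Type*} [Finite ι] {a : ι → ℝ} (ha : ∀ i, 0 < a i) :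
    ∃ ε > 0, ∀ i, ε ≤ a i := by
  cases isEmpty_or_nonempty ι
  · exact ⟨1, one_pos, isEmptyElim⟩
  · obtain ⟨i₀, hi₀⟩ := Finite.exists_min a
    exact ⟨a i₀, ha i₀, hi₀⟩

theorem pow_sub_mul_le_of_mul_le_succ {u : ℕ → ℝ} {ν : ℝ} (hν : 0 ≤ ν)
    (h : ∀ k, ν * u k ≤ u (k + 1)) {k l : ℕ} (hkl : k ≤ l) : ν ^ (l - k) * u k ≤ u l := by
  induction l, hkl using Nat.le_induction with
  | base => simp
  | succ l hkl ih =>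
    calc ν ^ (l + 1 - k) * u k = ν * (ν ^ (l - k) * u k) := by
          rw [Nat.sub_add_comm hkl, pow_succ]; ring
      _ ≤ ν * u l := by gcongr
      _ ≤ u (l + 1) := h l

theorem pow_mul_sum_range_add_le {u : ℕ → ℝ} {ν : ℝ} (hν₀ : 0 ≤ ν) (hν₁ : ν ≤ 1)
    (hu : ∀ k, 0 ≤ u k) (h : ∀ k, ν * u k ≤ u (k + 1)) (k T : ℕ) :
    ν ^ T * ∑ t ∈ Finset.range T, u (k + t) ≤ T * u (k + T) := by
  rw [Finset.mul_sum]
  calc ∑ t ∈ Finset.range T, ν ^ T * u (k + t) ≤ ∑ t ∈ Finset.range T, u (k + T) := by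
        refine Finset.sum_le_sum fun t ht => ?_
        have htT : t ≤ T := (Finset.mem_range.1 ht).le
        calc ν ^ T * u (k + t) ≤ ν ^ (k + T - (k + t)) * u (k + t) :=
              mul_le_mul_of_nonneg_right (pow_le_pow_of_le_one hν₀ hν₁ (by omega)) (hu _)
          _ ≤ u (k + T) := pow_sub_mul_le_of_mul_le_succ hν₀ h (by omega)
    _ = T * u (k + T) := by simp

section NonnegMatrix
variable {κ ι : Type*} [Fintype ι]

theorem mul_sum_le_dotProduct {δ : ℝ} {w v : ι → ℝ} (hw : ∀ j, δ ≤ w j) (hv : 0 ≤ v) :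
    δ * ∑ j, v j ≤ w ⬝ᵥ v := by
  rw [Finset.mul_sum]
  exact Finset.sum_le_sum fun j _ => mul_le_mul_of_nonneg_right (hw j) (hv j)

theorem mul_sum_le_sum_mulVec [Fintype κ] {P : Matrix κ ι ℝ} {ν : ℝ} (hν : ∀ j, ν ≤ ∑ i, P i j)
    {v : ι → ℝ} (hv : 0 ≤ v) : ν * ∑ j, v j ≤ ∑ i, (P *ᵥ v) i := by
  rw [← one_dotProduct (P *ᵥ v), dotProduct_mulVec]
  exact mul_sum_le_dotProduct (fun j => by simpa [vecMul, one_dotProduct] using hν j) hv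

theorem mulVec_mono_of_nonneg {P : Matrix κ ι ℝ} (hP : ∀ i j, 0 ≤ P i j) {u v : ι → ℝ}
    (huv : u ≤ v) : P *ᵥ u ≤ P *ᵥ v := fun i =>
  Finset.sum_le_sum fun j _ => mul_le_mul_of_nonneg_left (huv j) (hP i j)

theorem mulVec_nonneg_of_nonneg {P : Matrix κ ι ℝ} (hP : ∀ i j, 0 ≤ P i j) {v : ι → ℝ}
    (hv : 0 ≤ v) : 0 ≤ P *ᵥ v := by
  simpa using mulVec_mono_of_nonneg hP hv

theorem sum_mulVec_le_sum_mul_sum_mulVec_one [Fintype κ] {P : Matrix κ ι ℝ}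
    (hP : ∀ i j, 0 ≤ P i j) {v : ι → ℝ} (hv : 0 ≤ v) :
    ∑ i, (P *ᵥ v) i ≤ (∑ j, v j) * ∑ i, (P *ᵥ 1) i := by
  have hv_le : v ≤ (∑ j, v j) • 1 := fun j => by
    simpa using Finset.single_le_sum (fun j _ => hv j) (Finset.mem_univ j)
  rw [Finset.mul_sum]
  refine Finset.sum_le_sum fun i _ => ?_
  simpa [mulVec_smul] using mulVec_mono_of_nonneg hP hv_le i

end NonnegMatrix

section Pow
variable {ι : Type*} [Fintype ι] [DecidableEq ι] {P : Matrix ι ι ℝ}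

theorem mul_sum_pow_mulVec_le_succ (hP : ∀ i j, 0 ≤ P i j) {ν : ℝ} (hν : ∀ j, ν ≤ ∑ i, P i j)
    {v : ι → ℝ} (hv : 0 ≤ v) (k : ℕ) :
    ν * ∑ i, (P ^ k *ᵥ v) i ≤ ∑ i, (P ^ (k + 1) *ᵥ v) i := by
  rw [pow_succ', ← mulVec_mulVec]
  exact mul_sum_le_sum_mulVec hν (mulVec_nonneg_of_nonneg (pow_apply_nonneg hP k) hv)

theorem MatIrreducible.exists_apply_pos (hP : ∀ i j, 0 ≤ P i j) (hirr : MatIrreducible P)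
    (j : ι) : ∃ i, 0 < P i j := by
  obtain ⟨N, hN, hpos⟩ := hirr j j
  obtain ⟨m, rfl⟩ := Nat.exists_eq_succ_of_ne_zero hN.ne'
  by_contra! h
  refine hpos.not_ge ?_
  rw [pow_succ, mul_apply]
  exact Finset.sum_nonpos fun p _ =>
    mul_nonpos_of_nonneg_of_nonpos (pow_apply_nonneg hP m j p) (h p)

theorem MatIrreducible.exists_pos_le_sum_apply (hP : ∀ i j, 0 ≤ P i j) (hirr : MatIrreducible P) :
    ∃ ν > 0, ∀ j, ν ≤ ∑ i, P i j :=
  exists_pos_forall_le_of_pos fun j =>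
    let ⟨i, hi⟩ := hirr.exists_apply_pos hP j
    hi.trans_le (Finset.single_le_sum (fun i _ => hP i j) (Finset.mem_univ i))

theorem MatIrreducible.exists_pos_le_sum_range_pow_apply (hP : ∀ i j, 0 ≤ P i j)
    (hirr : MatIrreducible P) :
    ∃ T > 0, ∃ δ > 0, ∀ i j, δ ≤ ∑ t ∈ Finset.range T, (P ^ t) i j := by
  choose N _ hN using hirr
  set T := (Finset.univ.sup fun p : ι × ι => N p.1 p.2) + 1
  have hNT : ∀ i j, N i j ∈ Finset.range T := fun i j => Finset.mem_range.2 <| Nat.lt_succ_of_le <|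
    Finset.le_sup (f := fun p : ι × ι => N p.1 p.2) (Finset.mem_univ (i, j))
  obtain ⟨δ, hδ, hδ_le⟩ := exists_pos_forall_le_of_pos fun p : ι × ι =>
    (hN p.1 p.2).trans_le
      (Finset.single_le_sum (fun t _ => pow_apply_nonneg hP t p.1 p.2) (hNT p.1 p.2))
  exact ⟨T, Nat.succ_pos _, δ, hδ, fun i j => hδ_le (i, j)⟩

theorem MatIrreducible.sum_pow_mulVec_pos (hP : ∀ i j, 0 ≤ P i j) (hirr : MatIrreducible P)
    {v : ι → ℝ} (hv : 0 ≤ v) (hv₀ : v ≠ 0) (k : ℕ) : 0 < ∑ i, (P ^ k *ᵥ v) i := by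
  obtain ⟨ν, hν, hν_le⟩ := hirr.exists_pos_le_sum_apply hP
  obtain ⟨j, hj⟩ := (Pi.lt_def.1 (hv.lt_of_ne (Ne.symm hv₀))).2
  have hsum : 0 < ∑ i, (P ^ 0 *ᵥ v) i := by
    simpa using Finset.sum_pos' (fun i _ => hv i) ⟨j, Finset.mem_univ j, hj⟩
  calc 0 < ν ^ (k - 0) * ∑ i, (P ^ 0 *ᵥ v) i := by positivity
    _ ≤ _ := pow_sub_mul_le_of_mul_le_succ hν.le (mul_sum_pow_mulVec_le_succ hP hν_le hv) k.zero_le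

theorem MatIrreducible.exists_pos_mul_le_sum_pow_add_mulVec (hP : ∀ i j, 0 ≤ P i j)
    (hirr : MatIrreducible P) :
    ∃ T : ℕ, ∃ c > 0, ∀ v : ι → ℝ, 0 ≤ v → ∀ k,
      c * (∑ j, v j) * ∑ i, (P ^ k *ᵥ 1) i ≤ ∑ i, (P ^ (k + T) *ᵥ v) i := by
  obtain ⟨ν, hν, hν_le⟩ := hirr.exists_pos_le_sum_apply hP
  obtain ⟨T, hT, δ, hδ, hδ_le⟩ := hirr.exists_pos_le_sum_range_pow_apply hP
  set μ := min ν 1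
  have hμ_le : ∀ j, μ ≤ ∑ i, P i j := fun j => (min_le_left _ _).trans (hν_le j)
  refine ⟨T, μ ^ T * δ / T, by positivity, fun v hv k => ?_⟩
  set B := ∑ t ∈ Finset.range T, P ^ t
  have hBv : (δ * ∑ j, v j) • 1 ≤ B *ᵥ v := fun i => by
    rw [Pi.smul_apply, Pi.one_apply, smul_eq_mul, mul_one]
    exact mul_sum_le_dotProduct (fun j => by simpa [B, Matrix.sum_apply] using hδ_le i j) hv
  have hwindow : δ * (∑ j, v j) * ∑ i, (P ^ k *ᵥ 1) i ≤
      ∑ t ∈ Finset.range T, ∑ i, (P ^ (k + t) *ᵥ v) i := by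
    have hsum : ∑ t ∈ Finset.range T, ∑ i, (P ^ (k + t) *ᵥ v) i = ∑ i, (P ^ k *ᵥ (B *ᵥ v)) i := by
      simp only [B, pow_add, ← mulVec_mulVec, sum_mulVec, mulVec_sum, Finset.sum_apply]
      exact Finset.sum_comm
    rw [hsum, Finset.mul_sum]
    refine Finset.sum_le_sum fun i _ => ?_
    simpa [mulVec_smul] using mulVec_mono_of_nonneg (pow_apply_nonneg hP k) hBv i
  have hgrowth := pow_mul_sum_range_add_le (by positivity) (min_le_right ν 1)
    (fun k => Finset.sum_nonneg fun i _ => mulVec_nonneg_of_nonneg (pow_apply_nonneg hP k) hv i)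
    (mul_sum_pow_mulVec_le_succ hP hμ_le hv) k T
  have hT' : (0 : ℝ) < T := by exact_mod_cast hT
  calc μ ^ T * δ / T * (∑ j, v j) * ∑ i, (P ^ k *ᵥ 1) i
      = μ ^ T / T * (δ * (∑ j, v j) * ∑ i, (P ^ k *ᵥ 1) i) := by ring
    _ ≤ μ ^ T / T * ∑ t ∈ Finset.range T, ∑ i, (P ^ (k + t) *ᵥ v) i := by gcongr
    _ ≤ ∑ i, (P ^ (k + T) *ᵥ v) i := by
      rw [div_mul_eq_mul_div, div_le_iff₀ hT']
      linarith
end Pow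

section LinftyOpNorm
attribute [local instance] Matrix.linftyOpSeminormedAddCommGroup
  Matrix.linftyOpNormedAddCommGroup Matrix.linftyOpNormedRing Matrix.linftyOpNormedAlgebra

theorem Matrix.sum_norm_le_linfty_opNorm {m n α : Type*} [Fintype m] [Fintype n]
    [SeminormedAddCommGroup α] (C : Matrix m n α) (i : m) : ∑ j, ‖C i j‖ ≤ ‖C‖ := by
  have h : ∑ j, ‖C i j‖₊ ≤ ‖C‖₊ := by
    rw [linfty_opNNNorm_def]
    exact Finset.le_sup (f := fun i => ∑ j, ‖C i j‖₊) (Finset.mem_univ i)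
  simpa [← NNReal.coe_le_coe] using h

theorem Matrix.linfty_opNorm_le_sum_sum_norm {m n α : Type*} [Fintype m] [Fintype n]
    [SeminormedAddCommGroup α] (C : Matrix m n α) : ‖C‖ ≤ ∑ i, ∑ j, ‖C i j‖ := by
  have h : ‖C‖₊ ≤ ∑ i, ∑ j, ‖C i j‖₊ := by
    rw [linfty_opNNNorm_def]
    exact Finset.sup_le fun i _ =>
      Finset.single_le_sum (f := fun i => ∑ j, ‖C i j‖₊) (fun i _ => zero_le) (Finset.mem_univ i)
  simpa [← NNReal.coe_le_coe] using h

theorem MatIrreducible.tendsto_one_div_mul_log_sum_pow_mulVec_one {ι : Type*} [Fintype ι]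
    [DecidableEq ι] [Nonempty ι] {P : Matrix ι ι ℝ} (hP : ∀ i j, 0 ≤ P i j)
    (hirr : MatIrreducible P) (hρ : 0 < specRad P) :
    Tendsto (fun k : ℕ => 1 / (k : ℝ) * Real.log (∑ i, (P ^ k *ᵥ 1) i)) atTop
      (𝓝 (Real.log (specRad P))) := by
  set A := P.map Complex.ofReal
  have hnorm_apply : ∀ k i j, ‖(A ^ k) i j‖ = (P ^ k) i j := fun k i j => by
    have hpow : A ^ k = (P ^ k).map Complex.ofReal := (map_pow Complex.ofRealHom.mapMatrix P k).symm
    rw [hpow, map_apply, Complex.norm_real, Real.norm_of_nonneg (pow_apply_nonneg hP k i j)]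
  have hsum : ∀ k, ∑ i, (P ^ k *ᵥ 1) i = ∑ i, ∑ j, ‖(A ^ k) i j‖ := fun k => by
    simp [hnorm_apply, mulVec, dotProduct]
  have hlower : ∀ k, ‖A ^ k‖ ≤ ∑ i, (P ^ k *ᵥ 1) i := fun k =>
    hsum k ▸ linfty_opNorm_le_sum_sum_norm _
  have hupper : ∀ k, ∑ i, (P ^ k *ᵥ 1) i ≤ Fintype.card ι * ‖A ^ k‖ := fun k => by
    rw [hsum]
    simpa using Finset.sum_le_sum fun i (_ : i ∈ Finset.univ) => sum_norm_le_linfty_opNorm (A ^ k) i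
  have hpos : ∀ k, 0 < ‖A ^ k‖ := fun k =>
    pos_of_mul_pos_right ((hirr.sum_pow_mulVec_pos hP zero_le_one one_ne_zero k).trans_le
      (hupper k)) (Nat.cast_nonneg _)
  have hA := tendsto_one_div_mul_log_norm_pow A hρ (spectralRadius_eq_ofReal_sSup_norm A)
  exact tendsto_one_div_mul_log_of_le_of_le hA
    (tendsto_one_div_mul_log_const_mul (by positivity) hpos hA) hpos hlower hupper

end LinftyOpNorm

/-- For an irreducible nonnegative matrix `M` with spectral radius `λ > 0` and a nonzero
nonnegative vector `x`, `(1/k) log ‖M^k x‖₁` converges to `log λ` (in particular the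
limsup equals `log λ`). -/
theorem growth_rate_of_irreducible_matrix_on_nonneg_vector
    {n : ℕ} (M : Matrix (Fin n) (Fin n) ℝ)
    (hpos : ∀ i j, 0 ≤ M i j) (hirr : MatIrreducible M)
    (hlam : 0 < specRad M)
    (x : Fin n → ℝ) (hx : x ≠ 0) (hxpos : ∀ i, 0 ≤ x i) :
    Tendsto (fun k : ℕ => (1 / (k : ℝ)) * Real.log (∑ i, |((M ^ k).mulVec x) i|))
        atTop (nhds (Real.log (specRad M)))
    ∧ limsup (fun k : ℕ => (1 / (k : ℝ)) * Real.log (∑ i, |((M ^ k).mulVec x) i|)) atTop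
        = Real.log (specRad M) := by
  obtain ⟨i₀, -⟩ := Function.ne_iff.1 hx
  have : Nonempty (Fin n) := ⟨i₀⟩
  have hx₀ : 0 ≤ x := hxpos
  have hX : 0 < ∑ j, x j := by simpa using hirr.sum_pow_mulVec_pos hpos hx₀ hx 0
  have hone := hirr.tendsto_one_div_mul_log_sum_pow_mulVec_one hpos hlam
  have hone_pos := hirr.sum_pow_mulVec_pos hpos zero_le_one one_ne_zero
  obtain ⟨T, c, hc, hlower⟩ := hirr.exists_pos_mul_le_sum_pow_add_mulVec hpos
  have hupper : ∀ k, ∑ i, (M ^ (k + T) *ᵥ x) i ≤ (∑ j, x j) * ∑ i, (M ^ (k + T) *ᵥ 1) i :=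
    fun k => sum_mulVec_le_sum_mul_sum_mulVec_one (pow_apply_nonneg hpos _) hx₀
  have hshift : Tendsto (fun k : ℕ => 1 / (k : ℝ) * Real.log (∑ i, (M ^ (k + T) *ᵥ x) i))
      atTop (𝓝 (Real.log (specRad M))) :=
    tendsto_one_div_mul_log_of_le_of_le
      (tendsto_one_div_mul_log_const_mul (mul_pos hc hX) hone_pos hone)
      (tendsto_one_div_mul_log_const_mul hX (fun k => hone_pos (k + T))
        ((tendsto_one_div_mul_log_comp_add_iff T).2 hone))
      (fun k => mul_pos (mul_pos hc hX) (hone_pos k)) (hlower x hx₀) hupper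
  have habs : ∀ k, ∑ i, |(M ^ k *ᵥ x) i| = ∑ i, (M ^ k *ᵥ x) i := fun k =>
    Finset.sum_congr rfl fun i _ =>
      abs_of_nonneg (mulVec_nonneg_of_nonneg (pow_apply_nonneg hpos k) hx₀ i)
  have hmain :=
    (tendsto_one_div_mul_log_comp_add_iff (u := fun k => ∑ i, (M ^ k *ᵥ x) i) T).1 hshift
  simp only [habs]
  exact ⟨hmain, hmain.limsup_eq⟩
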